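/- With the classes Mh_{k,n}(ᾱ)[Θ] defined as in the paper: 𝒦 ∈ M_{N−1}(Mh_{N−1,n}(α)[Θ ∪ {𝒦}]) implies 𝒦 ∈ Mh_{N−1,n}(α)[Θ ∪ {𝒦}]. -/
import Mathlib


/-- Monadic second-order formulas: first-order variables `x i` and
unary second-order (predicate) variables `X i`, both indexed by `ℕ`. -/
inductive SO : Type
  | mem : ℕ → ℕ → SO            -- x i ∈ x j
  | pred : ℕ → ℕ → SO           -- X i (x j)
  | not : SO → SO
  | and : SO → SO → SO
  | or : SO → SO → SO
  | all1 : ℕ → SO → SO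
  | ex1 : ℕ → SO → SO
  | all2 : ℕ → SO → SO
  | ex2 : ℕ → SO → SO

/-- Satisfaction in the structure whose first-order part consists of the
ordinals `< α` (where membership between ordinals is `<`) and whose
second-order variables range over subsets of `α`. -/
def SatAt (α : Ordinal) (v : ℕ → Ordinal) (V : ℕ → Set Ordinal) : SO → Prop
  | .mem i j => v i < v j
  | .pred i j => v j ∈ V i
  | .not φ => ¬ SatAt α v V φ
  | .and φ ψ => SatAt α v V φ ∧ SatAt α v V ψ
  | .or φ ψ => SatAt α v V φ ∨ SatAt α v V ψ
  | .all1 i φ => ∀ β < α, SatAt α (Function.update v i β) V φ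
  | .ex1 i φ => ∃ β < α, SatAt α (Function.update v i β) V φ
  | .all2 i φ => ∀ S : Set Ordinal, S ⊆ Set.Iio α → SatAt α v (Function.update V i S) φ
  | .ex2 i φ => ∃ S : Set Ordinal, S ⊆ Set.Iio α ∧ SatAt α v (Function.update V i S) φ

/-- `φ` contains no second-order quantifier. -/
def SO.fo : SO → Prop
  | .mem _ _ => True
  | .pred _ _ => True
  | .not φ => φ.fo
  | .and φ ψ => φ.fo ∧ ψ.fo
  | .or φ ψ => φ.fo ∧ ψ.fo
  | .all1 _ φ => φ.fo
  | .ex1 _ φ => φ.fo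
  | .all2 _ _ => False
  | .ex2 _ _ => False

mutual
  /-- `φ` is a `Π¹ₙ`-formula. -/
  inductive IsPi : ℕ → SO → Prop
    | fo {n φ} : SO.fo φ → IsPi n φ
    | ofSigma {n φ} : IsSigma n φ → IsPi (n + 1) φ
    | all2 {n i φ} : IsPi (n + 1) φ → IsPi (n + 1) (SO.all2 i φ)
  /-- `φ` is a `Σ¹ₙ`-formula. -/
  inductive IsSigma : ℕ → SO → Prop
    | fo {n φ} : SO.fo φ → IsSigma n φ
    | ofPi {n φ} : IsPi n φ → IsSigma (n + 1) φ
    | ex2 {n i φ} : IsSigma (n + 1) φ → IsSigma (n + 1) (SO.ex2 i φ)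
end

/-- `α ∈ Mₙ(A)`: `A` is `Π¹ₙ`-indescribable in `α`. Every `Π¹ₙ`-sentence with a
second-order parameter `B ∩ α` true in the structure at `α` reflects to the
structure at some `β ∈ A ∩ α` (with parameter `B ∩ β`). -/
def MOp (n : ℕ) (A : Set Ordinal) (α : Ordinal) : Prop :=
  ∀ φ : SO, IsPi n φ → ∀ B : Set Ordinal,
    SatAt α (fun _ => 0) (fun _ => B ∩ Set.Iio α) φ →
    ∃ β ∈ A, β < α ∧ SatAt β (fun _ => 0) (fun _ => B ∩ Set.Iio β) φ

/-- `κ` is a `Π¹ₙ`-indescribable cardinal: `κ` is `Π¹ₙ`-indescribable in `κ`. -/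
def IsPiIndescribable (n : ℕ) (κ : Ordinal) : Prop :=
  MOp n Set.univ κ

/-- `π` is (the ordinal of) a regular cardinal. -/
def IsRegularOrd (π : Ordinal) : Prop :=
  ∃ c : Cardinal, c.IsRegular ∧ c.ord = π

/-- `(ν̄ ∙ ᾱ)[i] := (ν_i, α_{i+1}, …, α_{m−1})`. -/
def seqBullet (ν l : List Ordinal) (i : ℕ) : List Ordinal :=
  ν.getD i 0 :: l.drop (i + 1)

/-- `MhSpec K H Mh` says that the family `Mh k ᾱ Θ` satisfies the defining
(fixed-point) clause of the classes `Mh_{k,n}(ᾱ)[Θ]` of the paper, relative to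
the cardinal `𝒦 = K` and the Skolem-hull operator `H γ Θ π = ℋ_{γ,n}[Θ](π)`:
`π ∈ Mh_{k,n}(ᾱ)[Θ]` iff `π ≤ 𝒦` is a regular cardinal and for every sequence
`ν̄` with `ν̄(i) ∈ ℋ_{ν̄(i),n}[Θ ∪ {π}](π) ∩ ᾱ(i)` for all `i < lh(ᾱ)`,
`π ∈ M_k(⋂_{i<lh(ᾱ)} Mh_{k+i,n}((ν̄∙ᾱ)[i])[Θ ∪ {π}])`. -/
def MhSpec (K : Ordinal) (H : Ordinal → Finset Ordinal → Ordinal → Set Ordinal)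
    (Mh : ℕ → List Ordinal → Finset Ordinal → Set Ordinal) : Prop :=
  ∀ (k : ℕ) (l : List Ordinal) (Θ : Finset Ordinal) (π : Ordinal),
    π ∈ Mh k l Θ ↔
      IsRegularOrd π ∧ π ≤ K ∧
        ∀ ν : List Ordinal, ν.length = l.length →
          (∀ i < l.length,
            ν.getD i 0 ∈ H (ν.getD i 0) (insert π Θ) π ∧ ν.getD i 0 < l.getD i 0) →
          MOp k (⋂ i ∈ Finset.range l.length, Mh (k + i) (seqBullet ν l i) (insert π Θ)) π

/-- `𝒦 ∈ M_{N−1}(Mh_{N−1,n}(α)[Θ ∪ {𝒦}])` implies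
`𝒦 ∈ Mh_{N−1,n}(α)[Θ ∪ {𝒦}]` (for the regular cardinal `𝒦`). -/
theorem mh_of_mOp_mh (K : Ordinal) (hKreg : IsRegularOrd K)
    (H : Ordinal → Finset Ordinal → Ordinal → Set Ordinal)
    (Mh : ℕ → List Ordinal → Finset Ordinal → Set Ordinal)
    (hMh : MhSpec K H Mh) (N : ℕ) (hN : 1 ≤ N) (α : Ordinal) (Θ : Finset Ordinal)
    (h : MOp (N - 1) (Mh (N - 1) [α] (insert K Θ)) K) :
    K ∈ Mh (N - 1) [α] (insert K Θ) := by
  have mono : ∀ (n : ℕ) (A B : Set Ordinal) (β : Ordinal), A ⊆ B → MOp n A β → MOp n B β := by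
    intro n A B β hAB hA φ hφ C hC
    obtain ⟨γ, hγA, hlt, hs⟩ := hA φ hφ C hC
    exact ⟨γ, hAB hγA, hlt, hs⟩
  -- antimonotonicity for single-entry lists
  have anti : ∀ (k : ℕ) (Θ' : Finset Ordinal) (a b : Ordinal), b ≤ a →
      Mh k [a] Θ' ⊆ Mh k [b] Θ' := by
    intro k Θ' a b hba π hπ
    rw [hMh] at hπ ⊢
    obtain ⟨hreg, hK, hcond⟩ := hπ
    refine ⟨hreg, hK, ?_⟩
    intro ν hlen hν
    have hcond' := hcond ν hlen (by
      intro i hi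
      obtain ⟨h1, h2⟩ := hν i hi
      have hi0 : i = 0 := by simp at hi; omega
      subst hi0
      exact ⟨h1, lt_of_lt_of_le h2 hba⟩)
    -- the intersections coincide: seqBullet ν [b] 0 = seqBullet ν [a] 0
    simpa [seqBullet] using hcond'
  rw [hMh]
  refine ⟨hKreg, le_rfl, ?_⟩
  intro ν hlen hν
  obtain ⟨h1, h2⟩ := hν 0 (by simp)
  have hsub : Mh (N - 1) [α] (insert K Θ) ⊆ Mh (N - 1) [ν.getD 0 0] (insert K Θ) :=
    anti _ _ _ _ h2.le
  have := mono _ _ _ _ hsub h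
  simpa [seqBullet, Finset.insert_idem] using this
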